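/- arXiv:2505.04910 — 2 statements merged into one kernel-verified Lean document; each statement's English description precedes it below -/
import Mathlib

section
/- Let c : E' × E → ℂ be a matrix such that: (i) c(e',e) = 0 whenever w'(e') ≠ w(e); (ii) there is a constant K such that for every e' ∈ E' the set {e ∈ E : c(e',e) ≠ 0} has at most K elements; (iii) sup_{e',e} |c(e',e)| < ∞. Then Φ_c, defined by (Φ_c φ)_{e'} = ∑_{e∈E} c(e',e)·φ_e, is a well-defined continuous linear map 𝒮(E,V) → 𝒮(E',V). If moreover c' : E × E' → ℂ also satisfies (i)–(iii) (with the roles of (E,w) and (E',w') exchanged) and c and c' are mutually inverse matrices (∑_{e''∈E} c(e',e'')·c'(e'',f') = δ_{e',f'} for all e',f' ∈ E', and ∑_{e''∈E'} c'(e,e'')·c(e'',f) = δ_{e,f} for all e,f ∈ E), then Φ_c is an isomorphism of topological vector spaces with inverse Φ_{c'}. (Abstract form of the change-of-basis Lemma of §5.5.3 of the paper, which shows 𝔉_el(G) ≅ 𝔉_el^st(G) ⊕ 𝔉_el^unst(G) using that the change-of-basis matrices between Arthur's basis and the stable/unstable basis have boundedly many nonzero entries per column, bounded entries, and connect only elements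 with the same infinitesimal-character norm.) -/
/-!
# Statement 12

Abstract change-of-basis lemma for family Schwartz spaces.  Let `V` be a
finite-dimensional real inner product space (modelled as `EuclideanSpace ℝ (Fin n)`)
and `(E,w)`, `(E',w')` countable weighted sets.  If a matrix `c : E' × E → ℂ` connects
only indices of equal weight, has boundedly many nonzero entries in each row, and has
bounded entries, then `(Φ_c φ)_{e'} = ∑_e c(e',e) φ_e` defines a continuous linear map
`𝒮(E,V) → 𝒮(E',V)`; and if `c' : E × E' → ℂ` satisfies the same conditions and `c`,
`c'` are mutually inverse matrices, then `Φ_c` is an isomorphism of topological vector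
spaces with inverse `Φ_{c'}`.
-/

noncomputable section

open scoped BigOperators NNReal ENNReal
open Complex MeasureTheory

namespace PaperStableTransfer

/-- Model of a finite-dimensional real inner product space. -/
abbrev V (n : ℕ) : Type := EuclideanSpace ℝ (Fin n)

/-- The smoothness exponent `∞` (i.e. `C^∞`). -/
abbrev sm : WithTop ℕ∞ := (⊤ : ℕ∞)

variable {n : ℕ}

/-- Partial derivative in the `j`-th coordinate direction. -/
def pd (j : Fin n) (f : V n → ℂ) : V n → ℂ :=
  fun x => fderiv ℝ f x (EuclideanSpace.single j (1 : ℝ))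

/-- Iterated partial derivative along a list of coordinate directions.  These monomial
operators (together with their finite linear combinations) exhaust the
constant-coefficient differential operators on `V n`, so quantifying seminorm
conditions over all `D : List (Fin n)` is equivalent to quantifying over all
constant-coefficient differential operators. -/
def mderiv : List (Fin n) → (V n → ℂ) → V n → ℂ
  | [] => fun f => f
  | j :: D => fun f => pd j (mderiv D f)

lemma contDiff_mderiv {f : V n → ℂ} (hf : ContDiff ℝ sm f) (D : List (Fin n)) :
    ContDiff ℝ sm (mderiv D f) := by
  induction D with
  | nil => exact hf
  | cons j D ih =>
      exact (ih.fderiv_right (m := sm) (by simp)).clm_apply contDiff_const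

lemma mderiv_zero (D : List (Fin n)) : mderiv D (0 : V n → ℂ) = 0 := by
  induction D with
  | nil => rfl
  | cons j D ih =>
      show pd j (mderiv D (0 : V n → ℂ)) = 0
      rw [ih]
      funext x
      show fderiv ℝ (fun _ : V n => (0 : ℂ)) x (EuclideanSpace.single j (1:ℝ)) = 0
      rw [fderiv_const_apply]
      rfl

lemma mderiv_add {f g : V n → ℂ} (hf : ContDiff ℝ sm f) (hg : ContDiff ℝ sm g)
    (D : List (Fin n)) : mderiv D (f + g) = mderiv D f + mderiv D g := by
  induction D with
  | nil => rfl
  | cons j D ih =>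
      show pd j (mderiv D (f + g)) = pd j (mderiv D f) + pd j (mderiv D g)
      rw [ih]
      funext x
      have h1 : DifferentiableAt ℝ (mderiv D f) x :=
        ((contDiff_mderiv hf D).differentiable (by simp)).differentiableAt
      have h2 : DifferentiableAt ℝ (mderiv D g) x :=
        ((contDiff_mderiv hg D).differentiable (by simp)).differentiableAt
      show fderiv ℝ (fun y => mderiv D f y + mderiv D g y) x (EuclideanSpace.single j (1:ℝ)) = _
      rw [fderiv_fun_add h1 h2]
      rfl

lemma mderiv_smul (c : ℂ) {f : V n → ℂ} (hf : ContDiff ℝ sm f) (D : List (Fin n)) :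
    mderiv D (c • f) = c • mderiv D f := by
  induction D with
  | nil => rfl
  | cons j D ih =>
      show pd j (mderiv D (c • f)) = c • pd j (mderiv D f)
      rw [ih]
      funext x
      have h1 : DifferentiableAt ℝ (mderiv D f) x :=
        ((contDiff_mderiv hf D).differentiable (by simp)).differentiableAt
      show fderiv ℝ (fun y => c • mderiv D f y) x (EuclideanSpace.single j (1:ℝ)) = _
      rw [fderiv_fun_const_smul h1 c]
      rfl

variable (n) in
/-- Membership predicate for the family Schwartz space `𝒮(E,V)`: all components are
smooth and every constant-coefficient derivative decays, uniformly in `e ∈ E`, faster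
than any power of `(1 + w e + ‖x‖)`. -/
def IsSchwartzFam (E : Type) (w : E → ℝ≥0) (φ : E → V n → ℂ) : Prop :=
  (∀ e, ContDiff ℝ sm (φ e)) ∧
    ∀ (D : List (Fin n)) (N : ℕ), ∃ C : ℝ, ∀ (e : E) (x : V n),
      ‖mderiv D (φ e) x‖ * (1 + (w e : ℝ) + ‖x‖) ^ N ≤ C

variable (n) in
/-- The family Schwartz space `𝒮(E,V)` as a complex vector space. -/
def SchwartzFam (E : Type) (w : E → ℝ≥0) : Submodule ℂ (E → V n → ℂ) where
  carrier := {φ | IsSchwartzFam n E w φ}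
  zero_mem' := by
    refine ⟨fun e => contDiff_const, fun D N => ⟨0, fun e x => ?_⟩⟩
    have h0 : mderiv D ((0 : E → V n → ℂ) e) = 0 := mderiv_zero D
    rw [h0]
    simp
  add_mem' := by
    rintro φ ψ ⟨hφs, hφb⟩ ⟨hψs, hψb⟩
    refine ⟨fun e => (hφs e).add (hψs e), fun D N => ?_⟩
    obtain ⟨C₁, h₁⟩ := hφb D N
    obtain ⟨C₂, h₂⟩ := hψb D N
    refine ⟨C₁ + C₂, fun e x => ?_⟩
    have hadd : mderiv D ((φ + ψ) e) = mderiv D (φ e) + mderiv D (ψ e) :=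
      mderiv_add (hφs e) (hψs e) D
    have ht : (0:ℝ) ≤ (1 + (w e : ℝ) + ‖x‖) ^ N := by positivity
    calc ‖mderiv D ((φ + ψ) e) x‖ * (1 + (w e : ℝ) + ‖x‖) ^ N
        ≤ (‖mderiv D (φ e) x‖ + ‖mderiv D (ψ e) x‖) * (1 + (w e : ℝ) + ‖x‖) ^ N := by
          rw [hadd]
          exact mul_le_mul_of_nonneg_right (norm_add_le _ _) ht
      _ = ‖mderiv D (φ e) x‖ * (1 + (w e : ℝ) + ‖x‖) ^ N
            + ‖mderiv D (ψ e) x‖ * (1 + (w e : ℝ) + ‖x‖) ^ N := add_mul _ _ _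
      _ ≤ C₁ + C₂ := add_le_add (h₁ e x) (h₂ e x)
  smul_mem' := by
    rintro c φ ⟨hφs, hφb⟩
    refine ⟨fun e => (hφs e).const_smul c, fun D N => ?_⟩
    obtain ⟨C, hC⟩ := hφb D N
    refine ⟨‖c‖ * C, fun e x => ?_⟩
    have hsmul : mderiv D ((c • φ) e) = c • mderiv D (φ e) :=
      mderiv_smul c (hφs e) D
    calc ‖mderiv D ((c • φ) e) x‖ * (1 + (w e : ℝ) + ‖x‖) ^ N
        = ‖c‖ * (‖mderiv D (φ e) x‖ * (1 + (w e : ℝ) + ‖x‖) ^ N) := by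
          rw [hsmul]
          show ‖c • mderiv D (φ e) x‖ * _ = _
          rw [norm_smul, mul_assoc]
      _ ≤ ‖c‖ * C := mul_le_mul_of_nonneg_left (hC e x) (norm_nonneg c)

variable (n) in
/-- The linear embedding of `𝒮(E,V)` into a product of `ℓ^∞`-spaces recording all the
defining seminorms `‖φ‖_{D,N}`; the Fréchet topology of `𝒮(E,V)` defined by those
seminorms is the topology induced by this embedding. -/
def schwartzToLp {E : Type} {w : E → ℝ≥0} (φ : SchwartzFam n E w)
    (i : List (Fin n) × ℕ) : lp (fun _ : E × V n => ℂ) ∞ :=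
  ⟨fun p => mderiv i.1 ((φ : E → V n → ℂ) p.1) p.2
      * (((1 + (w p.1 : ℝ) + ‖p.2‖) ^ i.2 : ℝ) : ℂ), by
    obtain ⟨C, hC⟩ := φ.2.2 i.1 i.2
    apply memℓp_infty
    refine ⟨C, ?_⟩
    rintro y ⟨p, rfl⟩
    have hnn : (0:ℝ) ≤ (1 + (w p.1 : ℝ) + ‖p.2‖) ^ i.2 := by positivity
    calc ‖mderiv i.1 ((φ : E → V n → ℂ) p.1) p.2
          * (((1 + (w p.1 : ℝ) + ‖p.2‖) ^ i.2 : ℝ) : ℂ)‖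
        = ‖mderiv i.1 ((φ : E → V n → ℂ) p.1) p.2‖ * (1 + (w p.1 : ℝ) + ‖p.2‖) ^ i.2 := by
          rw [norm_mul, Complex.norm_real, Real.norm_eq_abs, _root_.abs_of_nonneg hnn]
      _ ≤ C := hC p.1 p.2⟩

/-- The Fréchet space topology on `𝒮(E,V)` defined by the seminorms `‖·‖_{D,N}`. -/
instance schwartzFamTopology (E : Type) (w : E → ℝ≥0) :
    TopologicalSpace (SchwartzFam n E w) :=
  TopologicalSpace.induced (fun φ => schwartzToLp n φ) inferInstance

/-!
Rows of `c` are finitely supported, so `Φ_c` commutes with every derivative `mderiv D`, and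
since `c` only connects indices of equal weight it also commutes with multiplication by the
weights `(1 + w + ‖x‖) ^ N`. Through the seminorm embedding `schwartzToLp`, `Φ_c` therefore
becomes the action of `c` on `ℓ^∞(E × V)`, which is bounded by the maximal row length times
the bound on the entries; this shows at once that `Φ_c φ` is a Schwartz family and that `Φ_c`
is continuous. Mutually inverse matrices give mutually inverse maps after exchanging a finite
sum with a finitely supported one.
-/

lemma finsum_mul_eq_sum {ι : Type*} {a g : ι → ℂ} {s : Finset ι}
    (hs : Function.support a ⊆ s) : ∑ᶠ i, a i * g i = ∑ i ∈ s, a i * g i :=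
  finsum_eq_sum_of_support_subset _ fun _ hi => hs (left_ne_zero_of_mul hi)

lemma norm_finsum_mul_le {ι : Type*} {a g : ι → ℂ} {s : Finset ι}
    (hs : Function.support a ⊆ s) {B C : ℝ} (hB : ∀ i, ‖a i‖ ≤ B) (hB0 : 0 ≤ B)
    (hg : ∀ i, ‖g i‖ ≤ C) : ‖∑ᶠ i, a i * g i‖ ≤ s.card * (B * C) := by
  rw [finsum_mul_eq_sum hs, ← nsmul_eq_mul]
  refine (norm_sum_le _ _).trans (Finset.sum_le_card_nsmul _ _ _ fun i _ => ?_)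
  rw [norm_mul]
  exact mul_le_mul (hB i) (hg i) (norm_nonneg _) hB0

section RowFiniteMatrix

variable {E E' : Type*} {c : E' → E → ℂ}

theorem exists_lpInfty_matrixAction (X : Type*)
    (hrow : ∃ K : ℕ, ∀ e' : E', ∃ s : Finset E, {e : E | c e' e ≠ 0} ⊆ ↑s ∧ s.card ≤ K)
    (hbdd : ∃ B : ℝ, ∀ (e' : E') (e : E), ‖c e' e‖ ≤ B) :
    ∃ M : lp (fun _ : E × X => ℂ) ∞ →L[ℂ] lp (fun _ : E' × X => ℂ) ∞,
      ∀ f p, M f p = ∑ᶠ e, c p.1 e * f (e, p.2) := by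
  obtain ⟨K, hK⟩ := hrow
  choose s hs hsK using hK
  obtain ⟨B, hB⟩ := hbdd
  have hB' : ∀ e' e, ‖c e' e‖ ≤ max B 0 := fun e' e => (hB e' e).trans (le_max_left _ _)
  have hbound : ∀ (f : lp (fun _ : E × X => ℂ) ∞) (p : E' × X),
      ‖∑ᶠ e, c p.1 e * f (e, p.2)‖ ≤ K * max B 0 * ‖f‖ := fun f p =>
    calc ‖∑ᶠ e, c p.1 e * f (e, p.2)‖
        ≤ (s p.1).card * (max B 0 * ‖f‖) :=
          norm_finsum_mul_le (hs p.1) (hB' p.1) (le_max_right _ _)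
            fun e => lp.norm_apply_le_norm ENNReal.top_ne_zero f (e, p.2)
      _ ≤ K * (max B 0 * ‖f‖) := by gcongr; exact_mod_cast hsK p.1
      _ = K * max B 0 * ‖f‖ := (mul_assoc _ _ _).symm
  let L : lp (fun _ : E × X => ℂ) ∞ →ₗ[ℂ] lp (fun _ : E' × X => ℂ) ∞ :=
    { toFun := fun f => ⟨fun p => ∑ᶠ e, c p.1 e * f (e, p.2),
        memℓp_infty ⟨_, Set.forall_mem_range.2 (hbound f)⟩⟩
      map_add' := fun f g => by
        ext p
        change ∑ᶠ e, c p.1 e * (f + g) (e, p.2)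
          = ∑ᶠ e, c p.1 e * f (e, p.2) + ∑ᶠ e, c p.1 e * g (e, p.2)
        simp only [finsum_mul_eq_sum (hs p.1)]
        simp only [lp.coeFn_add, Pi.add_apply, mul_add, Finset.sum_add_distrib]
      map_smul' := fun a f => by
        ext p
        change ∑ᶠ e, c p.1 e * (a • f) (e, p.2) = a * ∑ᶠ e, c p.1 e * f (e, p.2)
        simp only [mul_finsum, lp.coeFn_smul, Pi.smul_apply, smul_eq_mul, mul_left_comm] }
  exact ⟨L.mkContinuous _ fun f => lp.norm_le_of_forall_le (by positivity) (hbound f),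
    fun _ _ => rfl⟩

lemma support_finite_of_exists_card_le
    (hrow : ∃ K : ℕ, ∀ e' : E', ∃ s : Finset E, {e : E | c e' e ≠ 0} ⊆ ↑s ∧ s.card ≤ K)
    (e' : E') : (Function.support (c e')).Finite := by
  obtain ⟨K, hK⟩ := hrow
  obtain ⟨s, hs, -⟩ := hK e'
  exact s.finite_toSet.subset hs

end RowFiniteMatrix

section ChangeOfBasis

variable {E E' α : Type*} {c : E' → E → ℂ}

/-- The paper's `Φ_c`, for families of functions on an arbitrary domain. -/
def changeOfBasis (c : E' → E → ℂ) (φ : E → α → ℂ) : E' → α → ℂ :=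
  fun e' x => ∑ᶠ e, c e' e * φ e x

lemma changeOfBasis_eq_sum (hc : ∀ e', (Function.support (c e')).Finite) (φ : E → α → ℂ)
    (e' : E') : changeOfBasis c φ e' = ∑ e ∈ (hc e').toFinset, c e' e • φ e := by
  ext x
  rw [Finset.sum_apply]
  exact finsum_mul_eq_sum (hc e').coe_toFinset.ge

lemma changeOfBasis_add (hc : ∀ e', (Function.support (c e')).Finite) (φ ψ : E → α → ℂ) :
    changeOfBasis c (φ + ψ) = changeOfBasis c φ + changeOfBasis c ψ := by
  ext e' : 1
  simp only [changeOfBasis_eq_sum hc, Pi.add_apply, smul_add, Finset.sum_add_distrib]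

lemma changeOfBasis_smul (a : ℂ) (φ : E → α → ℂ) :
    changeOfBasis c (a • φ) = a • changeOfBasis c φ := by
  ext e' x
  simp only [changeOfBasis, Pi.smul_apply, smul_eq_mul, mul_finsum, mul_left_comm]

lemma changeOfBasis_mul_weight {w : E → ℝ≥0} {w' : E' → ℝ≥0}
    (hzero : ∀ (e' : E') (e : E), c e' e ≠ 0 → w' e' = w e) (ρ : ℝ≥0 → α → ℂ)
    (φ : E → α → ℂ) (e' : E') (x : α) :
    changeOfBasis c φ e' x * ρ (w' e') x
      = changeOfBasis c (fun e x => φ e x * ρ (w e) x) e' x := by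
  rw [changeOfBasis, finsum_mul]
  refine finsum_congr fun e => ?_
  by_cases hce : c e' e = 0
  · simp [hce]
  · rw [hzero e' e hce, mul_assoc]

lemma changeOfBasis_changeOfBasis {c' : E → E' → ℂ}
    (hc : ∀ e', (Function.support (c e')).Finite) (hc' : ∀ e, (Function.support (c' e)).Finite)
    (hdiag : ∀ e, ∑ᶠ e'', c' e e'' * c e'' e = 1)
    (hoff : ∀ e f, e ≠ f → ∑ᶠ e'', c' e e'' * c e'' f = 0) (φ : E → α → ℂ) :
    changeOfBasis c' (changeOfBasis c φ) = φ := by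
  ext e x
  have hsupp : ∀ e'', (Function.support fun f => c' e e'' * (c e'' f * φ f x)).Finite :=
    fun e'' => (hc e'').subset fun f hf => left_ne_zero_of_mul (right_ne_zero_of_mul hf)
  calc changeOfBasis c' (changeOfBasis c φ) e x
      = ∑ e'' ∈ (hc' e).toFinset, ∑ᶠ f, c' e e'' * (c e'' f * φ f x) := by
        rw [changeOfBasis, finsum_mul_eq_sum (hc' e).coe_toFinset.ge]
        simp only [changeOfBasis, mul_finsum]
    _ = ∑ᶠ f, (∑ᶠ e'', c' e e'' * c e'' f) * φ f x := by
        rw [← finsum_sum_comm _ _ fun e'' _ => hsupp e'']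
        refine finsum_congr fun f => ?_
        rw [finsum_mul_eq_sum (hc' e).coe_toFinset.ge, Finset.sum_mul]
        exact Finset.sum_congr rfl fun _ _ => (mul_assoc _ _ _).symm
    _ = φ e x := by
        rw [finsum_eq_single _ e fun f hf => by rw [hoff e f hf.symm, zero_mul], hdiag, one_mul]

end ChangeOfBasis

lemma mderiv_finset_sum_smul {ι : Type*} (s : Finset ι) (a : ι → ℂ) {φ : ι → V n → ℂ}
    (hφ : ∀ i, ContDiff ℝ sm (φ i)) (D : List (Fin n)) :
    mderiv D (∑ i ∈ s, a i • φ i) = ∑ i ∈ s, a i • mderiv D (φ i) := by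
  classical
  induction s using Finset.induction_on with
  | empty => simpa using mderiv_zero D
  | insert i s hi ih =>
    have hsum : ContDiff ℝ sm (∑ j ∈ s, a j • φ j) := by
      rw [Finset.sum_fn]
      exact ContDiff.sum fun j _ => (hφ j).const_smul (a j)
    rw [Finset.sum_insert hi, Finset.sum_insert hi,
      mderiv_add (f := a i • φ i) ((hφ i).const_smul (a i) :) hsum,
      mderiv_smul _ (hφ i), ih]

section SchwartzFam

variable {E E' : Type} {w : E → ℝ≥0} {w' : E' → ℝ≥0} {c : E' → E → ℂ}

lemma contDiff_changeOfBasis (hc : ∀ e', (Function.support (c e')).Finite)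
    {φ : E → V n → ℂ} (hφ : ∀ e, ContDiff ℝ sm (φ e)) (e' : E') :
    ContDiff ℝ sm (changeOfBasis c φ e') := by
  rw [changeOfBasis_eq_sum hc, Finset.sum_fn]
  exact ContDiff.sum fun e _ => (hφ e).const_smul (c e' e)

lemma mderiv_changeOfBasis (hc : ∀ e', (Function.support (c e')).Finite)
    {φ : E → V n → ℂ} (hφ : ∀ e, ContDiff ℝ sm (φ e)) (D : List (Fin n)) (e' : E') :
    mderiv D (changeOfBasis c φ e') = changeOfBasis c (fun e => mderiv D (φ e)) e' := by
  rw [changeOfBasis_eq_sum hc, changeOfBasis_eq_sum hc, mderiv_finset_sum_smul _ _ hφ]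

lemma mderiv_changeOfBasis_mul_weight (hzero : ∀ (e' : E') (e : E), c e' e ≠ 0 → w' e' = w e)
    (hc : ∀ e', (Function.support (c e')).Finite) (φ : SchwartzFam n E w)
    (i : List (Fin n) × ℕ) (p : E' × V n) :
    mderiv i.1 (changeOfBasis c φ p.1) p.2 * (((1 + (w' p.1 : ℝ) + ‖p.2‖) ^ i.2 : ℝ) : ℂ)
      = ∑ᶠ e, c p.1 e * schwartzToLp n φ i (e, p.2) := by
  rw [mderiv_changeOfBasis hc φ.2.1,
    changeOfBasis_mul_weight hzero fun r x => (((1 + (r : ℝ) + ‖x‖) ^ i.2 : ℝ) : ℂ)]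
  rfl

lemma isSchwartzFam_changeOfBasis (hzero : ∀ (e' : E') (e : E), c e' e ≠ 0 → w' e' = w e)
    (hrow : ∃ K : ℕ, ∀ e' : E', ∃ s : Finset E, {e : E | c e' e ≠ 0} ⊆ ↑s ∧ s.card ≤ K)
    (hbdd : ∃ B : ℝ, ∀ (e' : E') (e : E), ‖c e' e‖ ≤ B) {φ : E → V n → ℂ}
    (hφ : IsSchwartzFam n E w φ) : IsSchwartzFam n E' w' (changeOfBasis c φ) := by
  have hc := support_finite_of_exists_card_le hrow
  obtain ⟨M, hM⟩ := exists_lpInfty_matrixAction (V n) hrow hbdd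
  refine ⟨contDiff_changeOfBasis hc hφ.1, fun D N =>
    ⟨‖M (schwartzToLp n ⟨φ, hφ⟩ (D, N))‖, fun e' x => ?_⟩⟩
  calc ‖mderiv D (changeOfBasis c φ e') x‖ * (1 + (w' e' : ℝ) + ‖x‖) ^ N
      = ‖M (schwartzToLp n ⟨φ, hφ⟩ (D, N)) (e', x)‖ := by
        rw [hM, ← mderiv_changeOfBasis_mul_weight hzero hc ⟨φ, hφ⟩ (D, N) (e', x), norm_mul,
          Complex.norm_real, Real.norm_of_nonneg (by positivity)]
    _ ≤ _ := lp.norm_apply_le_norm ENNReal.top_ne_zero _ _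

def changeOfBasisCLM (hzero : ∀ (e' : E') (e : E), c e' e ≠ 0 → w' e' = w e)
    (hrow : ∃ K : ℕ, ∀ e' : E', ∃ s : Finset E, {e : E | c e' e ≠ 0} ⊆ ↑s ∧ s.card ≤ K)
    (hbdd : ∃ B : ℝ, ∀ (e' : E') (e : E), ‖c e' e‖ ≤ B) :
    SchwartzFam n E w →L[ℂ] SchwartzFam n E' w' where
  toFun φ := ⟨changeOfBasis c φ, isSchwartzFam_changeOfBasis hzero hrow hbdd φ.2⟩
  map_add' φ ψ :=
    Subtype.ext (changeOfBasis_add (support_finite_of_exists_card_le hrow) (φ : E → V n → ℂ) ψ)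
  map_smul' a φ := Subtype.ext (changeOfBasis_smul a (φ : E → V n → ℂ))
  cont := by
    obtain ⟨M, hM⟩ := exists_lpInfty_matrixAction (V n) hrow hbdd
    refine continuous_induced_rng.2 (continuous_pi fun i => ?_)
    have hcomm : ∀ φ : SchwartzFam n E w,
        schwartzToLp n ⟨changeOfBasis c φ, isSchwartzFam_changeOfBasis hzero hrow hbdd φ.2⟩ i
          = M (schwartzToLp n φ i) := fun φ => by
      ext p
      rw [hM]
      exact mderiv_changeOfBasis_mul_weight hzero (support_finite_of_exists_card_le hrow) φ i p
    simp only [Function.comp_def, hcomm]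
    exact M.continuous.comp ((continuous_apply i).comp
      (continuous_induced_dom (f := fun φ : SchwartzFam n E w => schwartzToLp n φ)))

end SchwartzFam

theorem schwartzFam_changeOfBasis_general
    (n : ℕ) (E E' : Type)
    (w : E → ℝ≥0) (w' : E' → ℝ≥0) (c : E' → E → ℂ)
    (hzero : ∀ (e' : E') (e : E), c e' e ≠ 0 → w' e' = w e)
    (hrow : ∃ K : ℕ, ∀ e' : E', ∃ s : Finset E, {e : E | c e' e ≠ 0} ⊆ ↑s ∧ s.card ≤ K)
    (hbdd : ∃ B : ℝ, ∀ (e' : E') (e : E), ‖c e' e‖ ≤ B) :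
    (∃ T : SchwartzFam n E w →L[ℂ] SchwartzFam n E' w',
        ∀ (φ : SchwartzFam n E w) (e' : E') (x : V n),
          ((T φ : SchwartzFam n E' w') : E' → V n → ℂ) e' x
            = ∑ᶠ e : E, c e' e * (φ : E → V n → ℂ) e x) ∧
      ∀ c' : E → E' → ℂ,
        (∀ (e : E) (e' : E'), c' e e' ≠ 0 → w e = w' e') →
        (∃ K : ℕ, ∀ e : E, ∃ s : Finset E', {e' : E' | c' e e' ≠ 0} ⊆ ↑s ∧ s.card ≤ K) →
        (∃ B : ℝ, ∀ (e : E) (e' : E'), ‖c' e e'‖ ≤ B) →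
        (∀ e' f' : E', (e' = f' → ∑ᶠ e'' : E, c e' e'' * c' e'' f' = 1)
          ∧ (e' ≠ f' → ∑ᶠ e'' : E, c e' e'' * c' e'' f' = 0)) →
        (∀ e f : E, (e = f → ∑ᶠ e'' : E', c' e e'' * c e'' f = 1)
          ∧ (e ≠ f → ∑ᶠ e'' : E', c' e e'' * c e'' f = 0)) →
        ∃ F : SchwartzFam n E w ≃L[ℂ] SchwartzFam n E' w',
          (∀ (φ : SchwartzFam n E w) (e' : E') (x : V n),
            ((F φ : SchwartzFam n E' w') : E' → V n → ℂ) e' x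
              = ∑ᶠ e : E, c e' e * (φ : E → V n → ℂ) e x) ∧
          (∀ (ψ : SchwartzFam n E' w') (e : E) (x : V n),
            ((F.symm ψ : SchwartzFam n E w) : E → V n → ℂ) e x
              = ∑ᶠ e' : E', c' e e' * (ψ : E' → V n → ℂ) e' x) := by
  refine ⟨⟨changeOfBasisCLM hzero hrow hbdd, fun _ _ _ => rfl⟩,
    fun c' hzero' hrow' hbdd' hinv hinv' => ?_⟩
  have hc := support_finite_of_exists_card_le hrow
  have hc' := support_finite_of_exists_card_le hrow'
  refine ⟨.equivOfInverse (changeOfBasisCLM (n := n) hzero hrow hbdd)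
      (changeOfBasisCLM hzero' hrow' hbdd') (fun φ => ?_) (fun ψ => ?_),
    fun _ _ _ => rfl, fun _ _ _ => rfl⟩
  · exact Subtype.ext <| changeOfBasis_changeOfBasis hc hc'
      (fun e => (hinv' e e).1 rfl) (fun e f => (hinv' e f).2) _
  · exact Subtype.ext <| changeOfBasis_changeOfBasis hc' hc
      (fun e' => (hinv e' e').1 rfl) (fun e' f' => (hinv e' f').2) _

/-- abstract change-of-basis lemma: if `c : E' × E → ℂ` vanishes
whenever `w'(e') ≠ w(e)`, has at most `K` nonzero entries in each row, and has bounded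
entries, then `Φ_c` is a well-defined continuous linear map `𝒮(E,V) → 𝒮(E',V)`;
if moreover `c' : E × E' → ℂ` satisfies the same conditions and `c`, `c'` are mutually
inverse matrices, then `Φ_c` is an isomorphism of topological vector spaces with
inverse `Φ_{c'}`. -/
theorem schwartzFam_changeOfBasis
    (n : ℕ) (E E' : Type) [Countable E] [Countable E']
    (w : E → ℝ≥0) (w' : E' → ℝ≥0) (c : E' → E → ℂ)
    (hzero : ∀ (e' : E') (e : E), c e' e ≠ 0 → w' e' = w e)
    (hrow : ∃ K : ℕ, ∀ e' : E', ∃ s : Finset E, {e : E | c e' e ≠ 0} ⊆ ↑s ∧ s.card ≤ K)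
    (hbdd : ∃ B : ℝ, ∀ (e' : E') (e : E), ‖c e' e‖ ≤ B) :
    (∃ T : SchwartzFam n E w →L[ℂ] SchwartzFam n E' w',
        ∀ (φ : SchwartzFam n E w) (e' : E') (x : V n),
          ((T φ : SchwartzFam n E' w') : E' → V n → ℂ) e' x
            = ∑ᶠ e : E, c e' e * (φ : E → V n → ℂ) e x) ∧
      ∀ c' : E → E' → ℂ,
        (∀ (e : E) (e' : E'), c' e e' ≠ 0 → w e = w' e') →
        (∃ K : ℕ, ∀ e : E, ∃ s : Finset E', {e' : E' | c' e e' ≠ 0} ⊆ ↑s ∧ s.card ≤ K) →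
        (∃ B : ℝ, ∀ (e : E) (e' : E'), ‖c' e e'‖ ≤ B) →
        (∀ e' f' : E', (e' = f' → ∑ᶠ e'' : E, c e' e'' * c' e'' f' = 1)
          ∧ (e' ≠ f' → ∑ᶠ e'' : E, c e' e'' * c' e'' f' = 0)) →
        (∀ e f : E, (e = f → ∑ᶠ e'' : E', c' e e'' * c e'' f = 1)
          ∧ (e ≠ f → ∑ᶠ e'' : E', c' e e'' * c e'' f = 0)) →
        ∃ F : SchwartzFam n E w ≃L[ℂ] SchwartzFam n E' w',
          (∀ (φ : SchwartzFam n E w) (e' : E') (x : V n),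
            ((F φ : SchwartzFam n E' w') : E' → V n → ℂ) e' x
              = ∑ᶠ e : E, c e' e * (φ : E → V n → ℂ) e x) ∧
          (∀ (ψ : SchwartzFam n E' w') (e : E) (x : V n),
            ((F.symm ψ : SchwartzFam n E w) : E → V n → ℂ) e x
              = ∑ᶠ e' : E', c' e e' * (ψ : E' → V n → ℂ) e' x) :=
  schwartzFam_changeOfBasis_general n E E' w w' c hzero hrow hbdd

end PaperStableTransfer
end
end

section
/- Let n ≥ 1, let A ∈ GL_n(ℤ) be semisimple (diagonalizable over ℂ), and let θ be the automorphism of the complex torus T = (ℂ^×)^n given by θ(t)_i = ∏_{j=1}^n t_j^{A_{ij}}. Let F = {t ∈ T : θ(t) = t} be the fixed-point subgroup and F° its identity connected component (for the standard topology). Then the map F° × T → T sending (t₀, s) to t₀ · s · θ(s)^{−1} is surjective; equivalently, T = F° · (1−θ)T, where (1−θ)T = {s·θ(s)^{−1} : s ∈ T}. (This is the surjectivity assertion, deduced from the Smith normal form, used in the proof of the π₀-finiteness Theorem 5.4 of the paper: for a semisimple automorphism θ′ of a maximal torus 𝒯 of a complex reductive group, the multiplication map 𝒯^{θ′,∘}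 × (1−θ′)𝒯 → 𝒯 is surjective.) -/
/-!
Lift to the universal cover `exp : ℂⁿ → T`, on which `θ` becomes the linear map `A`.
Since `A` is diagonalizable, `ℂⁿ = ker (A - 1) + im (1 - A)`. Write `log t = u + (w - A w)`
with `A u = u`: then `t = exp u · exp w · θ(exp w)⁻¹`, and `exp u` lies in `F°` because the
line `c ↦ exp (c u)` joins it to `1` inside `F`.
-/

noncomputable section

namespace PaperStableTransfer

/-- The automorphism of the complex torus `(ℂ^×)^n` induced by an integer matrix `A`:
`θ(t)_i = ∏_j t_j^{A_{ij}}`. -/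
def torusAut (n : ℕ) (A : Matrix (Fin n) (Fin n) ℤ) (t : Fin n → ℂˣ) : Fin n → ℂˣ :=
  fun i => ∏ j, t j ^ A i j

open Matrix

section LinearAlgebra

variable {K ι : Type*} [Field K] [Fintype ι] [DecidableEq ι]

theorem exists_eq_add_sub_diagonal_mulVec (d y : ι → K) :
    ∃ u w, diagonal d *ᵥ u = u ∧ y = u + (w - diagonal d *ᵥ w) := by
  -- where `d i = 1` the division by zero makes `w i = 0`, so `u i = y i`
  refine ⟨fun i => y i - (1 - d i) * (y i / (1 - d i)), fun i => y i / (1 - d i), ?_, ?_⟩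
  · funext i
    rw [mulVec_diagonal]
    rcases eq_or_ne (d i) 1 with hi | hi
    · rw [hi, one_mul]
    · rw [mul_div_cancel₀ _ (sub_ne_zero.mpr hi.symm), sub_self, mul_zero]
  · funext i
    simp only [Pi.add_apply, Pi.sub_apply, mulVec_diagonal]
    ring

theorem exists_eq_add_sub_mulVec_of_conj_diagonal {B : Matrix ι ι K} (P : (Matrix ι ι K)ˣ)
    (d : ι → K) (hB : (P : Matrix ι ι K) * B * ((P⁻¹ : (Matrix ι ι K)ˣ) : Matrix ι ι K) =
      diagonal d) (v : ι → K) :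
    ∃ u w, B *ᵥ u = u ∧ v = u + (w - B *ᵥ w) := by
  set Q : Matrix ι ι K := ((P⁻¹ : (Matrix ι ι K)ˣ) : Matrix ι ι K)
  have hQP : Q * P = 1 := P.inv_mul
  have hBQ : B * Q = Q * diagonal d := by
    rw [← hB, ← mul_assoc, ← mul_assoc, hQP, one_mul]
  have conj (x : ι → K) : B *ᵥ (Q *ᵥ x) = Q *ᵥ (diagonal d *ᵥ x) := by
    rw [mulVec_mulVec, mulVec_mulVec, hBQ]
  obtain ⟨u, w, hu, hv⟩ := exists_eq_add_sub_diagonal_mulVec d (P *ᵥ v)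
  refine ⟨Q *ᵥ u, Q *ᵥ w, by rw [conj, hu], ?_⟩
  calc v = Q *ᵥ (P *ᵥ v) := by rw [mulVec_mulVec, hQP, one_mulVec]
    _ = _ := by rw [hv, mulVec_add, mulVec_sub, conj]

end LinearAlgebra

section TorusExp

variable {ι : Type*}

def torusExp (v : ι → ℂ) : ι → ℂˣ :=
  fun i => Units.mk0 (Complex.exp (v i)) (Complex.exp_ne_zero _)

@[simp]
theorem val_torusExp_apply (v : ι → ℂ) (i : ι) : (torusExp v i : ℂ) = Complex.exp (v i) := rfl

theorem torusExp_zero : torusExp (0 : ι → ℂ) = 1 := by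
  ext; simp

theorem torusExp_add (v w : ι → ℂ) : torusExp (v + w) = torusExp v * torusExp w := by
  ext; simp [Complex.exp_add]

theorem torusExp_sub (v w : ι → ℂ) : torusExp (v - w) = torusExp v * (torusExp w)⁻¹ := by
  ext; simp [Complex.exp_sub, div_eq_mul_inv]

theorem torusExp_surjective : Function.Surjective (torusExp : (ι → ℂ) → ι → ℂˣ) :=
  fun t => ⟨fun i => Complex.log (t i), by ext i; simp [Complex.exp_log (t i).ne_zero]⟩

theorem continuous_torusExp : Continuous (torusExp : (ι → ℂ) → ι → ℂˣ) :=
  continuous_pi fun i => Units.isEmbedding_val₀.continuous_iff.mpr <|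
    Complex.continuous_exp.comp (continuous_apply i)

end TorusExp

theorem torusAut_torusExp {n : ℕ} (A : Matrix (Fin n) (Fin n) ℤ) (v : Fin n → ℂ) :
    torusAut n A (torusExp v) = torusExp (A.map (Int.cast : ℤ → ℂ) *ᵥ v) := by
  ext i
  simp [torusAut, mulVec, dotProduct, Complex.exp_sum, ← Complex.exp_int_mul]

theorem torusExp_mem_connectedComponentIn_fixed {n : ℕ} {A : Matrix (Fin n) (Fin n) ℤ}
    {u : Fin n → ℂ} (hu : A.map (Int.cast : ℤ → ℂ) *ᵥ u = u) :
    torusExp u ∈ connectedComponentIn {s | torusAut n A s = s} 1 := by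
  have hline : Continuous fun c : ℂ => torusExp (c • u) :=
    continuous_torusExp.comp (continuous_id.smul continuous_const)
  refine (isPreconnected_range hline).subset_connectedComponentIn ⟨0, ?_⟩ ?_ ⟨1, ?_⟩
  · simp only [zero_smul, torusExp_zero]
  · rintro _ ⟨c, rfl⟩
    rw [Set.mem_ofPred_eq, torusAut_torusExp, mulVec_smul, hu]
  · simp only [one_smul]

theorem torus_eq_fixedComponent_mul_oneSubAut_general
    (n : ℕ) (A : (Matrix (Fin n) (Fin n) ℤ)ˣ)
    (hsemisimple : ∃ P : (Matrix (Fin n) (Fin n) ℂ)ˣ, ∃ d : Fin n → ℂ,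
      (P : Matrix (Fin n) (Fin n) ℂ)
          * ((A : Matrix (Fin n) (Fin n) ℤ).map (Int.cast : ℤ → ℂ))
          * ((P⁻¹ : (Matrix (Fin n) (Fin n) ℂ)ˣ) : Matrix (Fin n) (Fin n) ℂ)
        = Matrix.diagonal d) :
    ∀ t : Fin n → ℂˣ,
      ∃ t₀ ∈ connectedComponentIn
          {s : Fin n → ℂˣ | torusAut n (A : Matrix (Fin n) (Fin n) ℤ) s = s} 1,
        ∃ s : Fin n → ℂˣ,
          t = t₀ * (s * (torusAut n (A : Matrix (Fin n) (Fin n) ℤ) s)⁻¹) := by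
  obtain ⟨P, d, hP⟩ := hsemisimple
  intro t
  obtain ⟨v, rfl⟩ := torusExp_surjective t
  obtain ⟨u, w, hu, rfl⟩ := exists_eq_add_sub_mulVec_of_conj_diagonal P d hP v
  refine ⟨torusExp u, torusExp_mem_connectedComponentIn_fixed hu, torusExp w, ?_⟩
  rw [torusAut_torusExp, torusExp_add, torusExp_sub]

/-- for `n ≥ 1` and a semisimple `A ∈ GL_n(ℤ)` inducing the
automorphism `θ` of `T = (ℂ^×)^n`, every `t ∈ T` can be written as
`t = t₀ · s · θ(s)⁻¹` with `t₀` in the identity connected component `F°` of the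
fixed-point subgroup `F = {t : θ t = t}` and `s ∈ T`; that is,
`T = F° · (1 − θ)T`. -/
theorem torus_eq_fixedComponent_mul_oneSubAut
    (n : ℕ) (hn : 1 ≤ n) (A : (Matrix (Fin n) (Fin n) ℤ)ˣ)
    (hsemisimple : ∃ P : (Matrix (Fin n) (Fin n) ℂ)ˣ, ∃ d : Fin n → ℂ,
      (P : Matrix (Fin n) (Fin n) ℂ)
          * ((A : Matrix (Fin n) (Fin n) ℤ).map (Int.cast : ℤ → ℂ))
          * ((P⁻¹ : (Matrix (Fin n) (Fin n) ℂ)ˣ) : Matrix (Fin n) (Fin n) ℂ)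
        = Matrix.diagonal d) :
    ∀ t : Fin n → ℂˣ,
      ∃ t₀ ∈ connectedComponentIn
          {s : Fin n → ℂˣ | torusAut n (A : Matrix (Fin n) (Fin n) ℤ) s = s} 1,
        ∃ s : Fin n → ℂˣ,
          t = t₀ * (s * (torusAut n (A : Matrix (Fin n) (Fin n) ℤ) s)⁻¹) :=
  torus_eq_fixedComponent_mul_oneSubAut_general n A hsemisimple

end PaperStableTransfer
end
end
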